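/- Infinite fat-shattering of the weak class: for every L > 0, every 0 < γ ≤ L/6, and every positive integer m, there exist points x_1, …, x_m ∈ [0,1] and real thresholds r_1, …, r_m such that for every labeling y ∈ {−1,1}^m there exists a function f : [0,1] → ℝ with ‖f‖_w ≤ L and y_i·(f(x_i) − r_i) ≥ γ for all i ∈ {1, …, m}. In fact one may take x_i = 2^{−i} and r_i = 0, so the infinite set {2^{−n} : n ≥ 1} is γ-shattered by {f : ‖f‖_w ≤ L}. -/

import Mathlib

/-! Take `f x = γ * φ (log x)`, where `φ` is a `4`-Lipschitz function with values in `[-1, 1]`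
taking the value `y i` at `log 2^{-(i+1)}`: these points are `log 2 > 1/2` apart, so the labels
are `4`-Lipschitz on them, and a McShane extension clipped to `[-1, 1]` does the job. For `x'`
within `x / 3` of `x`, `log` is `3 / (2x)`-Lipschitz between them, and farther away the bound
`|f| ≤ γ` suffices; hence `Λ_f(x) ≤ 6γ / x`, so `{Λ_f ≥ t} ⊆ [0, 6γ / t]` and `‖f‖_w ≤ 6γ ≤ L`. -/

open MeasureTheory Set ENNReal

/-- The local slope of `f` at `x`: `Λ_f(x) = sup_{x' ∈ [0,1], x' ≠ x} |f(x) − f(x')|/|x − x'|`,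
valued in `[0,∞]`. -/
noncomputable def locSlope (f : ℝ → ℝ) (x : ℝ) : ℝ≥0∞ :=
  ⨆ (x' : ℝ) (_ : x' ∈ Set.Icc (0:ℝ) 1) (_ : x' ≠ x),
    ENNReal.ofReal (|f x - f x'| / |x - x'|)

/-- Strong average smoothness: `‖f‖_s = ∫_{[0,1]} Λ_f(x) dx`. -/
noncomputable def strongNorm (f : ℝ → ℝ) : ℝ≥0∞ :=
  ∫⁻ x in Set.Icc (0:ℝ) 1, locSlope f x

/-- Weak average smoothness: `‖f‖_w = sup_{t>0} t·λ({x ∈ [0,1] : Λ_f(x) ≥ t})`. -/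
noncomputable def weakNorm (f : ℝ → ℝ) : ℝ≥0∞ :=
  ⨆ (t : ℝ) (_ : 0 < t),
    ENNReal.ofReal t * volume {x ∈ Set.Icc (0:ℝ) 1 | ENNReal.ofReal t ≤ locSlope f x}

/-- Total variation of `f` on `[0,1]`. -/
noncomputable def totalVar (f : ℝ → ℝ) : ℝ≥0∞ := eVariationOn f (Set.Icc 0 1)

theorem locSlope_le_ofReal {f : ℝ → ℝ} {x K : ℝ}
    (h : ∀ x' ∈ Icc (0:ℝ) 1, |f x - f x'| ≤ K * |x - x'|) : locSlope f x ≤ ENNReal.ofReal K :=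
  iSup₂_le fun x' hx' => iSup_le fun hne => ENNReal.ofReal_le_ofReal <|
    (div_le_iff₀ (abs_pos.2 (sub_ne_zero.2 hne.symm))).2 (h x' hx')

theorem weakNorm_le_of_locSlope_le {f : ℝ → ℝ} {C : ℝ} (hC : 0 ≤ C)
    (h : ∀ x ∈ Ioc (0:ℝ) 1, locSlope f x ≤ ENNReal.ofReal (C / x)) :
    weakNorm f ≤ ENNReal.ofReal C := by
  refine iSup₂_le fun t ht => ?_
  have hsub : {x ∈ Icc (0:ℝ) 1 | ENNReal.ofReal t ≤ locSlope f x} ⊆ Icc 0 (C / t) := by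
    rintro x ⟨hx, hslope⟩
    refine ⟨hx.1, ?_⟩
    by_contra! hlt
    have hx0 : 0 < x := (div_nonneg hC ht.le).trans_lt hlt
    have htx : t ≤ C / x :=
      (ENNReal.ofReal_le_ofReal_iff (div_nonneg hC hx0.le)).1 (hslope.trans (h x ⟨hx0, hx.2⟩))
    rw [div_lt_iff₀ ht] at hlt
    rw [le_div_iff₀ hx0] at htx
    linarith
  calc ENNReal.ofReal t * volume {x ∈ Icc (0:ℝ) 1 | ENNReal.ofReal t ≤ locSlope f x}
      ≤ ENNReal.ofReal t * ENNReal.ofReal (C / t) := by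
        rw [← sub_zero (C / t), ← Real.volume_Icc]
        gcongr
    _ = ENNReal.ofReal C := by rw [← ENNReal.ofReal_mul ht.le, mul_div_cancel₀ _ ht.ne']

theorem Real.log_sub_log_le_div {a b : ℝ} (ha : 0 < a) (hab : a ≤ b) :
    log b - log a ≤ (b - a) / a := by
  rw [← Real.log_div (ha.trans_le hab).ne' ha.ne', sub_div, div_self ha.ne']
  exact Real.log_le_sub_one_of_pos (div_pos (ha.trans_le hab) ha)

theorem abs_sub_comp_log_le {φ : ℝ → ℝ} {K : NNReal} {B x x' : ℝ} (hφ : LipschitzWith K φ)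
    (hB : ∀ t, |φ t| ≤ B) (hKB : (K : ℝ) ≤ 4 * B) (hx : 0 < x) :
    |φ (Real.log x) - φ (Real.log x')| ≤ 6 * B / x * |x - x'| := by
  rw [div_mul_eq_mul_div, le_div_iff₀ hx]
  rcases le_or_gt (x / 3) |x - x'| with hfar | hnear
  · have hB0 : 0 ≤ B := (abs_nonneg _).trans (hB 0)
    have h2B : |φ (Real.log x) - φ (Real.log x')| ≤ 2 * B := by
      linarith [abs_sub (φ (Real.log x)) (φ (Real.log x')), hB (Real.log x), hB (Real.log x')]
    nlinarith
  · have hx'0 : 2 * x / 3 < x' := by linarith [neg_abs_le (x - x'), le_abs_self (x - x')]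
    have hlog : |Real.log x - Real.log x'| ≤ 3 / 2 * |x - x'| / x := by
      rcases le_total x x' with hle | hle
      · rw [abs_sub_comm, abs_of_nonneg (sub_nonneg.2 (Real.log_le_log hx hle)),
          abs_of_nonpos (sub_nonpos.2 hle)]
        calc _ ≤ (x' - x) / x := Real.log_sub_log_le_div hx hle
          _ ≤ _ := by gcongr; linarith
      · rw [abs_of_nonneg (sub_nonneg.2 (Real.log_le_log (by linarith) hle)),
          abs_of_nonneg (sub_nonneg.2 hle)]
        calc _ ≤ (x - x') / x' := Real.log_sub_log_le_div (by linarith) hle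
          _ ≤ _ := by rw [div_le_div_iff₀ (by linarith) hx]; nlinarith
    rw [le_div_iff₀ hx] at hlog
    have hK := hφ.dist_le_mul (Real.log x) (Real.log x')
    rw [Real.dist_eq, Real.dist_eq] at hK
    calc |φ (Real.log x) - φ (Real.log x')| * x ≤ K * (|Real.log x - Real.log x'| * x) := by
          rw [← mul_assoc]; gcongr
      _ ≤ 4 * B * (3 / 2 * |x - x'|) := by gcongr; exact (NNReal.coe_nonneg K).trans hKB
      _ = 6 * B * |x - x'| := by ring

theorem exists_lipschitzWith_abs_le_one_eq_of_separated {α ι : Type*} [PseudoMetricSpace α]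
    {K : NNReal} (z : ι → α) (w : ι → ℝ) (hw : ∀ i, |w i| ≤ 1)
    (hz : Pairwise fun i j => 2 ≤ K * dist (z i) (z j)) :
    ∃ φ : α → ℝ, LipschitzWith K φ ∧ (∀ t, |φ t| ≤ 1) ∧ ∀ i, φ (z i) = w i := by
  have hinj : Function.Injective z := fun i j hij => by
    by_contra hne
    have : 2 ≤ K * dist (z i) (z j) := hz hne
    rw [hij, dist_self, mul_zero] at this
    norm_num at this
  have hlip : LipschitzOnWith K (Function.extend z w 0) (range z) := by
    refine LipschitzOnWith.of_dist_le_mul ?_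
    rintro _ ⟨i, rfl⟩ _ ⟨j, rfl⟩
    rw [hinj.extend_apply, hinj.extend_apply, Real.dist_eq]
    rcases eq_or_ne i j with rfl | hij
    · simp
    · linarith [abs_sub (w i) (w j), hw i, hw j, hz hij]
  obtain ⟨g, hg, hgw⟩ := hlip.extend_real
  refine ⟨fun t => max (-1) (min 1 (g t)), (hg.const_min 1).const_max (-1),
    fun t => abs_le.2 ⟨le_max_left _ _, max_le (by norm_num) (min_le_left _ _)⟩, fun i => ?_⟩
  show max (-1) (min 1 (g (z i))) = w i
  rw [← hgw (mem_range_self i), hinj.extend_apply]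
  obtain ⟨h1, h2⟩ := abs_le.1 (hw i)
  rw [min_eq_right h2, max_eq_right h1]

theorem two_le_four_mul_dist_log_half_pow {i j : ℕ} (hij : i ≠ j) :
    2 ≤ 4 * dist (Real.log ((1 / 2 : ℝ) ^ (i + 1))) (Real.log ((1 / 2) ^ (j + 1))) := by
  have hij' : (1 : ℝ) ≤ |(i : ℝ) - j| := by
    exact_mod_cast Int.one_le_abs (sub_ne_zero.2 (Int.natCast_inj.not.2 hij))
  rw [Real.dist_eq, Real.log_pow, Real.log_pow, ← sub_mul, abs_mul, one_div, Real.log_inv,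
    abs_neg, abs_of_pos (Real.log_pos one_lt_two)]
  push_cast
  rw [add_sub_add_right_eq_sub]
  nlinarith [Real.log_two_gt_d9]

theorem weak_class_fat_shattering_general (L : ℝ) (γ : ℝ) (hγ : 0 < γ)
    (hγL : γ ≤ L / 6) (m : ℕ) :
    ∃ x r : Fin m → ℝ,
      (∀ i, x i ∈ Set.Icc (0:ℝ) 1) ∧
      (∀ i, x i = (1 / 2 : ℝ) ^ ((i : ℕ) + 1)) ∧ (∀ i, r i = 0) ∧
      ∀ y : Fin m → ℝ, (∀ i, y i = 1 ∨ y i = -1) →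
        ∃ f : ℝ → ℝ, weakNorm f ≤ ENNReal.ofReal L ∧
          ∀ i, γ ≤ y i * (f (x i) - r i) := by
  refine ⟨fun i => (1 / 2 : ℝ) ^ ((i : ℕ) + 1), 0,
    fun i => ⟨by positivity, pow_le_one₀ (by norm_num) (by norm_num)⟩,
    fun _ => rfl, fun _ => rfl, fun y hy => ?_⟩
  have hy1 : ∀ i, |y i| ≤ 1 := fun i => by rcases hy i with h | h <;> simp [h]
  obtain ⟨φ, hφ, hφ1, hφy⟩ := exists_lipschitzWith_abs_le_one_eq_of_separated (K := 4)
    (fun i : Fin m => Real.log ((1 / 2 : ℝ) ^ ((i : ℕ) + 1))) y hy1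
    fun i j hij => by exact_mod_cast two_le_four_mul_dist_log_half_pow (Fin.val_injective.ne hij)
  refine ⟨fun x => γ * φ (Real.log x), ?_, fun i => ?_⟩
  · refine (weakNorm_le_of_locSlope_le (C := 6 * γ) (by positivity) fun x hx =>
      locSlope_le_ofReal fun x' _ => ?_).trans (ENNReal.ofReal_le_ofReal (by linarith))
    rw [← mul_sub, abs_mul, abs_of_pos hγ]
    calc _ ≤ γ * (6 * 1 / x * |x - x'|) := by
          gcongr; exact abs_sub_comp_log_le hφ hφ1 (by norm_num) hx.1
      _ = _ := by ring
  · simp only [hφy, Pi.zero_apply, sub_zero]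
    rcases hy i with h | h <;> simp [h]

/-- Infinite fat-shattering of the weak class: for every `L > 0`, `0 < γ ≤ L/6` and `m`,
the points `x_i = 2^{−i}` with thresholds `r_i = 0` are `γ`-shattered by
`{f : ‖f‖_w ≤ L}`. -/
theorem weak_class_fat_shattering (L : ℝ) (hL : 0 < L) (γ : ℝ) (hγ : 0 < γ)
    (hγL : γ ≤ L / 6) (m : ℕ) (hm : 0 < m) :
    ∃ x r : Fin m → ℝ,
      (∀ i, x i ∈ Set.Icc (0:ℝ) 1) ∧
      (∀ i, x i = (1 / 2 : ℝ) ^ ((i : ℕ) + 1)) ∧ (∀ i, r i = 0) ∧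
      ∀ y : Fin m → ℝ, (∀ i, y i = 1 ∨ y i = -1) →
        ∃ f : ℝ → ℝ, weakNorm f ≤ ENNReal.ofReal L ∧
          ∀ i, γ ≤ y i * (f (x i) - r i) :=
  weak_class_fat_shattering_general L γ hγ hγL m
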